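/- Let a be a bicomplex number in Ω (i.e., both idempotent components of a lie in the open unit disk), and let b_a(Z) = (Z - a)(1 - Za*)⁻¹ be the bicomplex Blaschke factor. Then for every Z with both idempotent components in the open unit disk, 1 - b_a(Z)·b_a(Z)* = (1 - ZZ*)(1 - aa*)·((1 - Za*)(1 - Z*a))⁻¹ ∈ 𝔻⁺, and if ZZ* = 1 then b_a(Z)·b_a(Z)* = 1. -/

import Mathlib

@[ext] structure BC where
  z1 : ℂ
  z2 : ℂ

namespace BC

instance : Zero BC := ⟨⟨0, 0⟩⟩
instance : One BC := ⟨⟨1, 0⟩⟩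
instance : Add BC := ⟨fun Z W => ⟨Z.z1 + W.z1, Z.z2 + W.z2⟩⟩
instance : Neg BC := ⟨fun Z => ⟨-Z.z1, -Z.z2⟩⟩
instance : Mul BC := ⟨fun Z W => ⟨Z.z1 * W.z1 - Z.z2 * W.z2, Z.z1 * W.z2 + Z.z2 * W.z1⟩⟩

@[simp] lemma zero_z1 : (0 : BC).z1 = 0 := rfl
@[simp] lemma zero_z2 : (0 : BC).z2 = 0 := rfl
@[simp] lemma one_z1 : (1 : BC).z1 = 1 := rfl
@[simp] lemma one_z2 : (1 : BC).z2 = 0 := rfl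
@[simp] lemma add_z1 (Z W : BC) : (Z + W).z1 = Z.z1 + W.z1 := rfl
@[simp] lemma add_z2 (Z W : BC) : (Z + W).z2 = Z.z2 + W.z2 := rfl
@[simp] lemma neg_z1 (Z : BC) : (-Z).z1 = -Z.z1 := rfl
@[simp] lemma neg_z2 (Z : BC) : (-Z).z2 = -Z.z2 := rfl
@[simp] lemma mul_z1 (Z W : BC) : (Z * W).z1 = Z.z1 * W.z1 - Z.z2 * W.z2 := rfl
@[simp] lemma mul_z2 (Z W : BC) : (Z * W).z2 = Z.z1 * W.z2 + Z.z2 * W.z1 := rfl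

instance : CommRing BC where
  add_assoc a b c := by ext <;> simp <;> ring
  zero_add a := by ext <;> simp
  add_zero a := by ext <;> simp
  add_comm a b := by ext <;> simp <;> ring
  neg_add_cancel a := by ext <;> simp
  mul_assoc a b c := by ext <;> simp <;> ring
  one_mul a := by ext <;> simp
  mul_one a := by ext <;> simp
  left_distrib a b c := by ext <;> simp <;> ring
  right_distrib a b c := by ext <;> simp <;> ring
  mul_comm a b := by ext <;> simp <;> ring
  zero_mul a := by ext <;> simp
  mul_zero a := by ext <;> simp
  nsmul := nsmulRec
  zsmul := zsmulRec

/-- Euclidean norm of a bicomplex number. -/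
noncomputable def enorm (Z : BC) : ℝ :=
  Real.sqrt (‖Z.z1‖ ^ 2 + ‖Z.z2‖ ^ 2)

/-- Embedding of ℂ(𝐢) into BC. -/
def ofC (z : ℂ) : BC := ⟨z, 0⟩

/-- Embedding of ℝ into BC. -/
noncomputable def ofR (r : ℝ) : BC := ⟨(r : ℂ), 0⟩

/-- The idempotent 𝐞 = (1 + 𝐢𝐣)/2. -/
noncomputable def e : BC := ⟨1 / 2, Complex.I / 2⟩

/-- The idempotent 𝐞† = (1 - 𝐢𝐣)/2. -/
noncomputable def edag : BC := ⟨1 / 2, -(Complex.I / 2)⟩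

/-- First idempotent component β₁ = z₁ - 𝐢 z₂. -/
def beta1 (Z : BC) : ℂ := Z.z1 - Complex.I * Z.z2

/-- Second idempotent component β₂ = z₁ + 𝐢 z₂. -/
def beta2 (Z : BC) : ℂ := Z.z1 + Complex.I * Z.z2

/-- The †-conjugation. -/
def dag (Z : BC) : BC := ⟨Z.z1, -Z.z2⟩

/-- The *-conjugation. -/
def bstar (Z : BC) : BC := ⟨(starRingEnd ℂ) Z.z1, -((starRingEnd ℂ) Z.z2)⟩

/-- The set 𝔻⁺ of positive hyperbolic numbers. -/
def Dpos : Set BC :=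
  {Z | ∃ ν μ : ℝ, 0 ≤ ν ∧ 0 ≤ μ ∧ Z = ofR ν * e + ofR μ * edag}

/-- Partial order induced by 𝔻⁺. -/
def hle (Z W : BC) : Prop := W - Z ∈ Dpos

/-- Hyperbolic-valued norm |Z|ₖ = |β₁|𝐞 + |β₂|𝐞†. -/
noncomputable def hnorm (Z : BC) : BC :=
  ofR ‖beta1 Z‖ * e + ofR ‖beta2 Z‖ * edag

/-- Z is a hyperbolic number: Z = x₁ + y₂ 𝐢𝐣. -/
def isHyp (Z : BC) : Prop := Z.z1.im = 0 ∧ Z.z2.re = 0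


/-- The bicomplex Blaschke factor with zero a. -/
noncomputable def ba (a Z : BC) : BC := (Z - a) * Ring.inverse (1 - Z * bstar a)

/-! The identity is algebra valid in any commutative ring with involution: writing
`D = 1 - Z a*`, one has `D D* - (Z - a)(Z - a)* = (1 - Z Z*)(1 - a a*)`, so only the
invertibility of `D` is needed. Invertibility and positivity are read off the idempotent
components `β₁, β₂`, which are ring homomorphisms to `ℂ` turning `*` into complex conjugation:
there `|β_i Z| ≤ 1` and `|β_i a| < 1` keep `1 - β_i Z · conj (β_i a)` away from `0`, and `𝔻⁺`
consists of the numbers whose two components are nonnegative reals. -/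

end BC

open scoped Ring

section StarRing

variable {R : Type*} [CommRing R] [StarRing R]

theorem star_one_sub_mul_star (Z a : R) : star (1 - Z * star a) = 1 - star Z * a := by
  simp [mul_comm]

theorem one_sub_blaschke_mul_star {a Z : R} (h : IsUnit (1 - Z * star a)) :
    1 - (Z - a) * (1 - Z * star a)⁻¹ʳ * star ((Z - a) * (1 - Z * star a)⁻¹ʳ) =
      (1 - Z * star Z) * (1 - a * star a) * ((1 - Z * star a) * (1 - star Z * a))⁻¹ʳ := by
  have hD := Ring.mul_inverse_cancel _ h
  have hD' := Ring.mul_inverse_cancel _ h.star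
  rw [star_one_sub_mul_star] at hD'
  rw [star_mul, ← Ring.inverse_star, star_one_sub_mul_star, star_sub, Ring.mul_inverse_rev]
  linear_combination (-(1 - star Z * a) * (1 - star Z * a)⁻¹ʳ) * hD - hD'

theorem blaschke_mul_star_eq_one {a Z : R} (h : IsUnit (1 - Z * star a)) (hZ : Z * star Z = 1) :
    (Z - a) * (1 - Z * star a)⁻¹ʳ * star ((Z - a) * (1 - Z * star a)⁻¹ʳ) = 1 := by
  have key := one_sub_blaschke_mul_star h
  rw [hZ, sub_self, zero_mul, zero_mul] at key
  exact (sub_eq_zero.1 key).symm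

end StarRing

section RCLike

open scoped ComplexOrder

variable {K : Type*} [RCLike K]

theorem RCLike.one_sub_mul_star_ne_zero {z w : K} (hz : ‖z‖ ≤ 1) (hw : ‖w‖ < 1) :
    1 - z * star w ≠ 0 := by
  have hlt : ‖z * star w‖ < 1 := by
    rw [norm_mul, norm_star]
    exact mul_lt_one_of_nonneg_of_lt_one_right hz (norm_nonneg w) hw
  intro h
  rw [← sub_eq_zero.1 h, norm_one] at hlt
  exact hlt.false

theorem RCLike.norm_eq_one_of_mul_star_self_eq_one {z : K} (h : z * star z = 1) : ‖z‖ = 1 := by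
  have := congrArg norm h
  rw [norm_mul, norm_star, norm_one] at this
  exact (mul_self_eq_one_iff.1 this).resolve_right (by linarith [norm_nonneg z])

theorem RCLike.one_sub_mul_star_self_nonneg {z : K} (h : ‖z‖ ≤ 1) : 0 ≤ 1 - z * star z := by
  rw [sub_nonneg, RCLike.star_def, RCLike.mul_conj, ← RCLike.ofReal_one, ← RCLike.ofReal_pow,
    RCLike.ofReal_le_ofReal]
  exact pow_le_one₀ (norm_nonneg z) h

end RCLike

namespace BC

instance : StarRing BC where
  star := bstar
  star_involutive Z := by ext <;> simp [bstar]
  star_mul Z W := by ext <;> simp [bstar] <;> ring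
  star_add Z W := by ext <;> simp [bstar, add_comm]

theorem bstar_eq_star (Z : BC) : bstar Z = star Z := rfl

@[simp] theorem sub_z1 (Z W : BC) : (Z - W).z1 = Z.z1 - W.z1 := by
  simp [sub_eq_add_neg]

@[simp] theorem sub_z2 (Z W : BC) : (Z - W).z2 = Z.z2 - W.z2 := by
  simp [sub_eq_add_neg]

@[simp] theorem beta1_one : beta1 1 = 1 := by simp [beta1]

@[simp] theorem beta2_one : beta2 1 = 1 := by simp [beta2]

@[simp] theorem beta1_mul (Z W : BC) : beta1 (Z * W) = beta1 Z * beta1 W := by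
  simp only [beta1, mul_z1, mul_z2]
  linear_combination (-(Z.z2 * W.z2)) * Complex.I_sq

@[simp] theorem beta2_mul (Z W : BC) : beta2 (Z * W) = beta2 Z * beta2 W := by
  simp only [beta2, mul_z1, mul_z2]
  linear_combination (-(Z.z2 * W.z2)) * Complex.I_sq

@[simp] theorem beta1_add (Z W : BC) : beta1 (Z + W) = beta1 Z + beta1 W := by
  simp only [beta1, add_z1, add_z2]; ring

@[simp] theorem beta2_add (Z W : BC) : beta2 (Z + W) = beta2 Z + beta2 W := by
  simp only [beta2, add_z1, add_z2]; ring

@[simp] theorem beta1_sub (Z W : BC) : beta1 (Z - W) = beta1 Z - beta1 W := by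
  simp only [beta1, sub_z1, sub_z2]; ring

@[simp] theorem beta2_sub (Z W : BC) : beta2 (Z - W) = beta2 Z - beta2 W := by
  simp only [beta2, sub_z1, sub_z2]; ring

@[simp] theorem beta1_star (Z : BC) : beta1 (star Z) = star (beta1 Z) := by
  simp [beta1, ← bstar_eq_star, bstar]

@[simp] theorem beta2_star (Z : BC) : beta2 (star Z) = star (beta2 Z) := by
  simp [beta2, ← bstar_eq_star, bstar]

@[simp] theorem beta1_ofC (z : ℂ) : beta1 (ofC z) = z := by simp [beta1, ofC]

@[simp] theorem beta2_ofC (z : ℂ) : beta2 (ofC z) = z := by simp [beta2, ofC]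

@[simp] theorem beta1_ofR (r : ℝ) : beta1 (ofR r) = r := by simp [beta1, ofR]

@[simp] theorem beta2_ofR (r : ℝ) : beta2 (ofR r) = r := by simp [beta2, ofR]

@[simp] theorem beta1_e : beta1 e = 1 := by
  simp only [beta1, e]; linear_combination (-1 / 2 : ℂ) * Complex.I_sq

@[simp] theorem beta2_e : beta2 e = 0 := by
  simp only [beta2, e]; linear_combination (1 / 2 : ℂ) * Complex.I_sq

@[simp] theorem beta1_edag : beta1 edag = 0 := by
  simp only [beta1, edag]; linear_combination (1 / 2 : ℂ) * Complex.I_sq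

@[simp] theorem beta2_edag : beta2 edag = 1 := by
  simp only [beta2, edag]; linear_combination (-1 / 2 : ℂ) * Complex.I_sq

theorem beta_ext {Z W : BC} (h1 : beta1 Z = beta1 W) (h2 : beta2 Z = beta2 W) : Z = W := by
  simp only [beta1, beta2] at h1 h2
  ext
  · linear_combination (h1 + h2) / 2
  · exact mul_left_cancel₀ (mul_ne_zero two_ne_zero Complex.I_ne_zero)
      (by linear_combination h2 - h1 : 2 * Complex.I * Z.z2 = 2 * Complex.I * W.z2)

theorem isUnit_of_beta_ne_zero {W : BC} (h1 : beta1 W ≠ 0) (h2 : beta2 W ≠ 0) : IsUnit W :=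
  IsUnit.of_mul_eq_one (ofC (beta1 W)⁻¹ * e + ofC (beta2 W)⁻¹ * edag) <| beta_ext
    (by simp [h1]) (by simp [h2])

theorem beta1_ringInverse {W : BC} (h : IsUnit W) : beta1 W⁻¹ʳ = (beta1 W)⁻¹ :=
  eq_inv_of_mul_eq_one_left <| by rw [← beta1_mul, Ring.inverse_mul_cancel W h, beta1_one]

theorem beta2_ringInverse {W : BC} (h : IsUnit W) : beta2 W⁻¹ʳ = (beta2 W)⁻¹ :=
  eq_inv_of_mul_eq_one_left <| by rw [← beta2_mul, Ring.inverse_mul_cancel W h, beta2_one]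

theorem isUnit_one_sub_mul_star {a Z : BC} (hZ1 : ‖beta1 Z‖ ≤ 1) (hZ2 : ‖beta2 Z‖ ≤ 1)
    (ha : ‖beta1 a‖ < 1 ∧ ‖beta2 a‖ < 1) : IsUnit (1 - Z * star a) :=
  isUnit_of_beta_ne_zero (by simpa using RCLike.one_sub_mul_star_ne_zero hZ1 ha.1)
    (by simpa using RCLike.one_sub_mul_star_ne_zero hZ2 ha.2)

theorem norm_beta_eq_one_of_mul_star_self_eq_one {Z : BC} (h : Z * star Z = 1) :
    ‖beta1 Z‖ = 1 ∧ ‖beta2 Z‖ = 1 :=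
  ⟨RCLike.norm_eq_one_of_mul_star_self_eq_one (by simpa using congrArg beta1 h),
    RCLike.norm_eq_one_of_mul_star_self_eq_one (by simpa using congrArg beta2 h)⟩

section Dpos

open scoped ComplexOrder

theorem mem_Dpos_iff {W : BC} : W ∈ Dpos ↔ 0 ≤ beta1 W ∧ 0 ≤ beta2 W := by
  constructor
  · rintro ⟨ν, μ, hν, hμ, rfl⟩
    simpa using ⟨hν, hμ⟩
  · rintro ⟨h1, h2⟩
    refine ⟨(beta1 W).re, (beta2 W).re, Complex.nonneg_iff.1 h1 |>.1,
      Complex.nonneg_iff.1 h2 |>.1, beta_ext ?_ ?_⟩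
    · simpa using Complex.eq_re_of_ofReal_le (r := 0) (by simpa using h1)
    · simpa using Complex.eq_re_of_ofReal_le (r := 0) (by simpa using h2)

theorem mul_mem_Dpos {W V : BC} (hW : W ∈ Dpos) (hV : V ∈ Dpos) : W * V ∈ Dpos := by
  rw [mem_Dpos_iff] at *
  simpa using ⟨mul_nonneg hW.1 hV.1, mul_nonneg hW.2 hV.2⟩

theorem ringInverse_mem_Dpos {W : BC} (hW : W ∈ Dpos) : W⁻¹ʳ ∈ Dpos := by
  by_cases h : IsUnit W
  · rw [mem_Dpos_iff] at *
    rw [beta1_ringInverse h, beta2_ringInverse h]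
    exact ⟨inv_nonneg.2 hW.1, inv_nonneg.2 hW.2⟩
  · rw [Ring.inverse_non_unit W h]
    exact mem_Dpos_iff.2 (by simp [beta1, beta2])

theorem mul_star_self_mem_Dpos (W : BC) : W * star W ∈ Dpos :=
  mem_Dpos_iff.2 <| by
    simp only [beta1_mul, beta1_star, beta2_mul, beta2_star]
    exact ⟨mul_star_self_nonneg (beta1 W), mul_star_self_nonneg (beta2 W)⟩

theorem one_sub_mul_star_self_mem_Dpos {W : BC} (h1 : ‖beta1 W‖ ≤ 1) (h2 : ‖beta2 W‖ ≤ 1) :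
    1 - W * star W ∈ Dpos :=
  mem_Dpos_iff.2 <| by
    simp only [beta1_sub, beta1_one, beta1_mul, beta1_star, beta2_sub, beta2_one, beta2_mul,
      beta2_star]
    exact ⟨RCLike.one_sub_mul_star_self_nonneg h1, RCLike.one_sub_mul_star_self_nonneg h2⟩

end Dpos

theorem blaschke_factor_properties (a : BC)
    (ha : ‖beta1 a‖ < 1 ∧ ‖beta2 a‖ < 1) :
    (∀ Z : BC, ‖beta1 Z‖ < 1 → ‖beta2 Z‖ < 1 →
      (1 - ba a Z * bstar (ba a Z) =
          (1 - Z * bstar Z) * (1 - a * bstar a) *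
            Ring.inverse ((1 - Z * bstar a) * (1 - bstar Z * a)) ∧
        1 - ba a Z * bstar (ba a Z) ∈ Dpos)) ∧
    (∀ Z : BC, Z * bstar Z = 1 → ba a Z * bstar (ba a Z) = 1) := by
  simp only [ba, bstar_eq_star]
  refine ⟨fun Z hZ1 hZ2 => ?_, fun Z hZ => ?_⟩
  · have key := one_sub_blaschke_mul_star (isUnit_one_sub_mul_star hZ1.le hZ2.le ha)
    refine ⟨key, ?_⟩
    rw [key, ← star_one_sub_mul_star]
    exact mul_mem_Dpos
      (mul_mem_Dpos (one_sub_mul_star_self_mem_Dpos hZ1.le hZ2.le)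
        (one_sub_mul_star_self_mem_Dpos ha.1.le ha.2.le))
      (ringInverse_mem_Dpos (mul_star_self_mem_Dpos _))
  · obtain ⟨h1, h2⟩ := norm_beta_eq_one_of_mul_star_self_eq_one hZ
    exact blaschke_mul_star_eq_one (isUnit_one_sub_mul_star h1.le h2.le ha) hZ

end BC
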